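/- arXiv:math/0212420 — 4 statements merged into one kernel-verified Lean document; each statement's English description precedes it below -/
import Mathlib

section
/- Let l be a prime number, h ≥ 1, V = 𝔽_l^h, and let G be a subgroup of GL_h(𝔽_l). Form the semidirect product Ω = (V × V) ⋊ G, where G acts on V × V diagonally by g·(v,w) = (gv, gw). Suppose σ ∈ G has the property that for every v ∈ V the element (v, 0, σ) of Ω is conjugate in Ω to an element of the form (0, w, τ) for some w ∈ V and τ ∈ G. Then 1 is not an eigenvalue of σ, i.e. σx = x implies x = 0 for all x ∈ V. (Lemma 5.2.) -/
/-!
Lemma 5.2: Let `V = 𝔽_l^h` and `G ≤ GL_h(𝔽_l)`. In the semidirect product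
`Ω = (V × V) ⋊ G` (with multiplication `(v, w, g)(v', w', g') = (v + g v', w + g w', g g')`),
if `σ ∈ G` is such that for every `v ∈ V` the element `(v, 0, σ)` is conjugate in `Ω`
to an element of the form `(0, w, τ)`, then `1` is not an eigenvalue of `σ`.

Conjugacy of `x` and `y` in `Ω` is spelled out as the existence of `c = (a, b, γ) ∈ Ω`
with `c * x = y * c`; the multiplication law is written out componentwise.
-/
theorem support_problem_semidirect_conjugacy_lemma
    (l : ℕ) [Fact l.Prime] (h : ℕ) (hh : 1 ≤ h)
    (G : Subgroup (Matrix.GeneralLinearGroup (Fin h) (ZMod l)))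
    (σ : Matrix.GeneralLinearGroup (Fin h) (ZMod l)) (hσ : σ ∈ G)
    (hconj : ∀ v : Fin h → ZMod l,
      ∃ (a b w : Fin h → ZMod l) (γ τ : Matrix.GeneralLinearGroup (Fin h) (ZMod l)),
        γ ∈ G ∧ τ ∈ G ∧
        -- `(a, b, γ) * (v, 0, σ) = (0, w, τ) * (a, b, γ)` in `Ω = (V × V) ⋊ G`:
        a + (γ : Matrix (Fin h) (Fin h) (ZMod l)).mulVec v
            = (τ : Matrix (Fin h) (Fin h) (ZMod l)).mulVec a ∧
        b = w + (τ : Matrix (Fin h) (Fin h) (ZMod l)).mulVec b ∧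
        γ * σ = τ * γ) :
    ∀ x : Fin h → ZMod l, (σ : Matrix (Fin h) (Fin h) (ZMod l)).mulVec x = x → x = 0 := by
  -- The hypothesis implies `σ - 1` is surjective, hence injective.
  set M : Matrix (Fin h) (Fin h) (ZMod l) := (σ : Matrix (Fin h) (Fin h) (ZMod l)) - 1 with hM
  have hsurj : Function.Surjective M.mulVecLin := by
    intro v
    obtain ⟨a, b, w, γ, τ, -, -, h1, -, h3⟩ := hconj v
    refine ⟨((γ⁻¹ : Matrix.GeneralLinearGroup (Fin h) (ZMod l)) :
        Matrix (Fin h) (Fin h) (ZMod l)).mulVec a, ?_⟩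
    have hcomm : σ * γ⁻¹ = γ⁻¹ * τ := by
      have := h3
      calc σ * γ⁻¹ = γ⁻¹ * (γ * σ) * γ⁻¹ := by group
        _ = γ⁻¹ * (τ * γ) * γ⁻¹ := by rw [h3]
        _ = γ⁻¹ * τ := by group
    have hcommM : (σ : Matrix (Fin h) (Fin h) (ZMod l)) *
        ((γ⁻¹ : Matrix.GeneralLinearGroup (Fin h) (ZMod l)) : Matrix (Fin h) (Fin h) (ZMod l)) =
        ((γ⁻¹ : Matrix.GeneralLinearGroup (Fin h) (ZMod l)) :
          Matrix (Fin h) (Fin h) (ZMod l)) * τ := by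
      have := congrArg Units.val hcomm
      simpa [Units.val_mul] using this
    have hγa : (τ : Matrix (Fin h) (Fin h) (ZMod l)).mulVec a - a =
        (γ : Matrix (Fin h) (Fin h) (ZMod l)).mulVec v := by
      rw [← h1]; abel
    have hγinv : ((γ⁻¹ : Matrix.GeneralLinearGroup (Fin h) (ZMod l)) :
        Matrix (Fin h) (Fin h) (ZMod l)) * γ = 1 := Units.inv_mul γ
    show M.mulVecLin _ = v
    rw [Matrix.mulVecLin_apply, hM, Matrix.sub_mulVec, Matrix.one_mulVec,
      Matrix.mulVec_mulVec, hcommM, ← Matrix.mulVec_mulVec, ← Matrix.mulVec_sub,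
      hγa, Matrix.mulVec_mulVec, hγinv, Matrix.one_mulVec]
  have hinj : Function.Injective M.mulVecLin :=
    (LinearMap.injective_iff_surjective (f := M.mulVecLin)).mpr hsurj
  intro x hx
  have : M.mulVecLin x = M.mulVecLin 0 := by
    simp [hM, Matrix.sub_mulVec, Matrix.one_mulVec, hx]
  exact hinj this
end

section
/- Let l be an odd prime and h ≥ 1. Let J_h(1) ∈ GL_h(𝔽_l) be the Jordan block of size h with eigenvalue 1 (ones on the diagonal and on the superdiagonal, zeros elsewhere). Then the block matrix σ = [[J_h(1), J_h(1)], [0, (J_h(1)ᵀ)⁻¹]] belongs to the symplectic group Sp_{2h}(𝔽_l), and the eigenspace of σ for the eigenvalue 1, i.e. the kernel of σ − I_{2h} acting on 𝔽_l^{2h}, has dimension exactly 1. (Claim (iv) of Example 3.6, providing the matrix σ_i required by Assumption II(1)(iv) and Remark 5.3.) -/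
open scoped Matrix

/-- The unipotent upper-triangular Jordan block `J_h(1)` of size `h` with eigenvalue `1`:
ones on the diagonal and the superdiagonal, zeros elsewhere. -/
def jordanBlockOne (l h : ℕ) : Matrix (Fin h) (Fin h) (ZMod l) :=
  Matrix.of fun i j => if (j : ℕ) = (i : ℕ) ∨ (j : ℕ) = (i : ℕ) + 1 then 1 else 0

/-!
Write `J = J_h(1)`. The block matrix `σ = [[J, J], [0, (Jᵀ)⁻¹]]` is symplectic because its
off-diagonal block `J` makes `J Jᵀ` symmetric. If `(x, y)` is fixed by `σ`, then `Jᵀ y = y`,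
which kills every coordinate of `y` but the last one; the last coordinate of `J x + J y = x` reads
`x_last + y_last = x_last`, so `y = 0`. Finally `J x = x` kills every coordinate of `x` but
the first, so the fixed space is spanned by the first basis vector.
-/

theorem Matrix.fromBlocks_mem_symplecticGroup {ι R : Type*} [Fintype ι] [DecidableEq ι]
    [CommRing R] {A B D : Matrix ι ι R} (hAD : A * Dᵀ = 1) (hAB : B * Aᵀ = A * Bᵀ) :
    Matrix.fromBlocks A B 0 D ∈ Matrix.symplecticGroup ι R := by
  have hDA : D * Aᵀ = 1 := by simpa using congrArg Matrix.transpose hAD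
  rw [SymplecticGroup.mem_iff, Matrix.J, Matrix.fromBlocks_transpose,
    Matrix.fromBlocks_multiply, Matrix.fromBlocks_multiply]
  simp [hAB, hDA, hAD]

namespace jordanBlockOne

variable {l n : ℕ}

theorem det (h : ℕ) : (jordanBlockOne l h).det = 1 := by
  rw [Matrix.det_of_isUpperTriangular]
  · simp [jordanBlockOne]
  · intro i j hij
    simp only [id, Fin.lt_def] at hij
    simp only [jordanBlockOne, Matrix.of_apply, ite_eq_right_iff]
    omega

theorem mulVec_castSucc (x : Fin (n + 1) → ZMod l) (i : Fin n) :
    (jordanBlockOne l (n + 1) *ᵥ x) i.castSucc = x i.castSucc + x i.succ := by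
  rw [Matrix.mulVec, dotProduct, Fintype.sum_eq_add _ _ (Fin.castSucc_lt_succ (i := i)).ne]
  · simp [jordanBlockOne]
  · rintro j ⟨h₁, h₂⟩
    simp only [jordanBlockOne, Matrix.of_apply]
    rw [if_neg, zero_mul]
    rintro (h | h) <;> [exact h₁ (Fin.ext h); exact h₂ (Fin.ext (by simpa using h))]

theorem mulVec_last (x : Fin (n + 1) → ZMod l) :
    (jordanBlockOne l (n + 1) *ᵥ x) (Fin.last n) = x (Fin.last n) := by
  rw [Matrix.mulVec, dotProduct, Fintype.sum_eq_single (Fin.last n)]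
  · simp [jordanBlockOne]
  · intro j hj
    simp only [jordanBlockOne, Matrix.of_apply]
    rw [if_neg, zero_mul]
    rintro (h | h)
    · exact hj (Fin.ext h)
    · rw [Fin.val_last] at h
      omega

theorem transpose_mulVec_zero (y : Fin (n + 1) → ZMod l) :
    ((jordanBlockOne l (n + 1))ᵀ *ᵥ y) 0 = y 0 := by
  rw [Matrix.mulVec, dotProduct, Fintype.sum_eq_single 0]
  · simp [jordanBlockOne]
  · intro j hj
    simp only [jordanBlockOne, Matrix.transpose_apply, Matrix.of_apply]
    rw [if_neg, zero_mul]
    rintro (h | h)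
    · exact hj (Fin.ext h.symm)
    · simp at h

theorem transpose_mulVec_succ (y : Fin (n + 1) → ZMod l) (i : Fin n) :
    ((jordanBlockOne l (n + 1))ᵀ *ᵥ y) i.succ = y i.castSucc + y i.succ := by
  rw [Matrix.mulVec, dotProduct, Fintype.sum_eq_add _ _ (Fin.castSucc_lt_succ (i := i)).ne]
  · simp [jordanBlockOne]
  · rintro j ⟨h₁, h₂⟩
    simp only [jordanBlockOne, Matrix.transpose_apply, Matrix.of_apply]
    rw [if_neg, zero_mul]
    rintro (h | h) <;> [exact h₂ (Fin.ext h.symm); exact h₁ (Fin.ext (by simp only [Fin.val_succ, Fin.val_castSucc] at h ⊢; omega))]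

theorem mulVec_eq_self_iff (x : Fin (n + 1) → ZMod l) :
    jordanBlockOne l (n + 1) *ᵥ x = x ↔ ∀ i : Fin n, x i.succ = 0 := by
  refine ⟨fun hx i => ?_, fun hx => funext fun i => ?_⟩
  · simpa [mulVec_castSucc] using congrFun hx i.castSucc
  · induction i using Fin.lastCases with
    | last => exact mulVec_last x
    | cast i => rw [mulVec_castSucc, hx, add_zero]

theorem transpose_mulVec_eq_self_iff (y : Fin (n + 1) → ZMod l) :
    (jordanBlockOne l (n + 1))ᵀ *ᵥ y = y ↔ ∀ i : Fin n, y i.castSucc = 0 := by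
  refine ⟨fun hy i => ?_, fun hy => funext fun i => ?_⟩
  · simpa [transpose_mulVec_succ] using congrFun hy i.succ
  · induction i using Fin.cases with
    | zero => exact transpose_mulVec_zero y
    | succ i => rw [transpose_mulVec_succ, hy, zero_add]

theorem fromBlocks_mulVec_eq_self_iff (u : Fin (n + 1) ⊕ Fin (n + 1) → ZMod l) :
    Matrix.fromBlocks (jordanBlockOne l (n + 1)) (jordanBlockOne l (n + 1))
        0 ((jordanBlockOne l (n + 1))ᵀ)⁻¹ *ᵥ u = u ↔
      u = Pi.single (Sum.inl 0) (u (Sum.inl 0)) := by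
  set J := jordanBlockOne l (n + 1)
  have hJT : IsUnit Jᵀ.det := by simp [J, det]
  constructor
  · intro hu
    rw [Matrix.fromBlocks_mulVec] at hu
    have hx : J *ᵥ (u ∘ Sum.inl) + J *ᵥ (u ∘ Sum.inr) = u ∘ Sum.inl :=
      congrArg (· ∘ Sum.inl) hu
    have hy : (Jᵀ)⁻¹ *ᵥ (u ∘ Sum.inr) = u ∘ Sum.inr := by
      simpa using congrArg (· ∘ Sum.inr) hu
    have hJy : Jᵀ *ᵥ (u ∘ Sum.inr) = u ∘ Sum.inr := by
      conv_lhs =>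
        rw [← hy, Matrix.mulVec_mulVec, Matrix.mul_nonsing_inv _ hJT, Matrix.one_mulVec]
    have hy0 : u ∘ Sum.inr = 0 := by
      funext i
      induction i using Fin.lastCases with
      | last => simpa [J, mulVec_last] using congrFun hx (Fin.last n)
      | cast i => exact (transpose_mulVec_eq_self_iff _).1 hJy i
    have hJx : J *ᵥ (u ∘ Sum.inl) = u ∘ Sum.inl := by simpa [hy0] using hx
    ext (i | i)
    · induction i using Fin.cases with
      | zero => simp
      | succ i => simpa using (mulVec_eq_self_iff _).1 hJx i
    · simpa using congrFun hy0 i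
  · intro hu
    rw [hu, Matrix.mulVec_single]
    ext (i | i) <;> simp [J, jordanBlockOne, Pi.single_apply, eq_comm]

theorem ker_fromBlocks_sub_one :
    LinearMap.ker (Matrix.fromBlocks (jordanBlockOne l (n + 1)) (jordanBlockOne l (n + 1))
        0 ((jordanBlockOne l (n + 1))ᵀ)⁻¹ - 1).mulVecLin =
      Submodule.span (ZMod l) {Pi.single (Sum.inl 0) 1} := by
  ext u
  rw [LinearMap.mem_ker, Matrix.mulVecLin_apply, Matrix.sub_mulVec, Matrix.one_mulVec,
    sub_eq_zero, fromBlocks_mulVec_eq_self_iff, Submodule.mem_span_singleton]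
  simp only [← Pi.single_smul', smul_eq_mul, mul_one]
  exact ⟨fun hu => ⟨_, hu.symm⟩, by rintro ⟨a, rfl⟩; simp⟩

end jordanBlockOne

theorem jordan_block_symplectic_matrix_eigenspace_one_dimensional_general
    (l : ℕ) [Fact l.Prime] (h : ℕ) (hh : 1 ≤ h) :
    Matrix.fromBlocks (jordanBlockOne l h) (jordanBlockOne l h)
        0 ((jordanBlockOne l h)ᵀ)⁻¹ ∈ Matrix.symplecticGroup (Fin h) (ZMod l) ∧
    Module.finrank (ZMod l)
      (LinearMap.ker
        ((Matrix.fromBlocks (jordanBlockOne l h) (jordanBlockOne l h)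
            0 ((jordanBlockOne l h)ᵀ)⁻¹
          - (1 : Matrix (Fin h ⊕ Fin h) (Fin h ⊕ Fin h) (ZMod l))).mulVecLin)) = 1 := by
  obtain ⟨n, rfl⟩ := Nat.exists_eq_add_of_le' hh
  refine ⟨Matrix.fromBlocks_mem_symplecticGroup ?_ rfl, ?_⟩
  · rw [Matrix.transpose_nonsing_inv, Matrix.transpose_transpose,
      Matrix.mul_nonsing_inv _ (by simp [jordanBlockOne.det])]
  · rw [jordanBlockOne.ker_fromBlocks_sub_one, finrank_span_singleton]
    simp

theorem jordan_block_symplectic_matrix_eigenspace_one_dimensional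
    (l : ℕ) [Fact l.Prime] (hl : Odd l) (h : ℕ) (hh : 1 ≤ h) :
    Matrix.fromBlocks (jordanBlockOne l h) (jordanBlockOne l h)
        0 ((jordanBlockOne l h)ᵀ)⁻¹ ∈ Matrix.symplecticGroup (Fin h) (ZMod l) ∧
    Module.finrank (ZMod l)
      (LinearMap.ker
        ((Matrix.fromBlocks (jordanBlockOne l h) (jordanBlockOne l h)
            0 ((jordanBlockOne l h)ᵀ)⁻¹
          - (1 : Matrix (Fin h ⊕ Fin h) (Fin h ⊕ Fin h) (ZMod l))).mulVecLin)) = 1 :=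
  jordan_block_symplectic_matrix_eigenspace_one_dimensional_general l h hh
end

section
/- Let E be a number field with ring of integers 𝓞_E, let B be a finitely generated 𝓞_E-module, and let P ∈ B be a nontorsion element (i.e. cP ≠ 0 for every nonzero c ∈ 𝓞_E). Then the set of maximal ideals λ of 𝓞_E such that P ∈ λ·B is finite. (This is the finiteness of 𝒫 ∖ 𝒫* asserted in Section 4: a nontorsion element of a finitely generated 𝓞_E-module lies in λB for only finitely many primes λ.) -/
open scoped NumberField nonZeroDivisors

/-!
Finiteness of `𝒫 ∖ 𝒫*` (Section 4): if `B` is a finitely generated module over the ring of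
integers `𝓞_E` of a number field `E` and `P ∈ B` is a nontorsion element, then `P ∈ λ·B`
for only finitely many maximal ideals `λ` of `𝓞_E`.
-/
set_option maxHeartbeats 1000000 in
theorem nontorsion_in_lambdaB_for_finitely_many_primes
    (E : Type*) [Field E] [NumberField E]
    (B : Type*) [AddCommGroup B] [Module (𝓞 E) B] [Module.Finite (𝓞 E) B]
    (P : B) (hP : ∀ c : 𝓞 E, c ≠ 0 → c • P ≠ 0) :
    {lam : Ideal (𝓞 E) | lam.IsMaximal ∧ P ∈ lam • (⊤ : Submodule (𝓞 E) B)}.Finite := by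
  classical
  set R := 𝓞 E
  let K := FractionRing R
  let M := LocalizedModule R⁰ B
  let f : B →ₗ[R] M := LocalizedModule.mkLinearMap R⁰ B
  have hfP : f P ≠ 0 := by
    rw [Ne, IsLocalizedModule.eq_zero_iff R⁰ f]
    rintro ⟨s, hs⟩
    exact hP s (nonZeroDivisors.coe_ne_zero s) hs
  haveI : Module.Finite K M := Module.Finite.of_isLocalizedModule R⁰ f
  obtain ⟨φ, hφ⟩ : ∃ φ : Module.Dual K M, φ (f P) ≠ 0 := by
    by_contra h
    push_neg at h
    exact hfP ((Module.forall_dual_apply_eq_zero_iff K (f P)).mp h)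
  let ψ : B →ₗ[R] K := (φ.restrictScalars R).comp f
  obtain ⟨s, hs⟩ : (⊤ : Submodule R B).FG := Module.Finite.fg_top
  obtain ⟨d, hd⟩ := IsLocalization.exist_integer_multiples R⁰ s (fun b : B => ψ b)
  have hint : ∀ b : B, IsLocalization.IsInteger R ((d : R) • ψ b) := by
    intro b
    have hb : b ∈ Submodule.span R (s : Set B) := hs ▸ Submodule.mem_top
    refine Submodule.span_induction (p := fun b _ => IsLocalization.IsInteger R ((d : R) • ψ b))
      ?_ ?_ ?_ ?_ hb
    · intro x hx
      simpa using hd x hx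
    · simpa using IsLocalization.isInteger_zero
    · intro x y _ _ hx hy
      simpa [map_add, smul_add] using IsLocalization.isInteger_add hx hy
    · intro r x _ hx
      have : (d : R) • ψ (r • x) = r • ((d : R) • ψ x) := by
        rw [map_smul, smul_comm]
      rw [this]
      exact IsLocalization.isInteger_smul hx
  obtain ⟨c, hc⟩ := hint P
  have hψP : ψ P ≠ 0 := hφ
  have hc0 : c ≠ 0 := by
    intro h0
    rw [h0, map_zero] at hc
    have hd0 : algebraMap R K (d : R) ≠ 0 :=
      IsFractionRing.to_map_ne_zero_of_mem_nonZeroDivisors d.2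
    have : (d : R) • ψ P = algebraMap R K (d : R) * ψ P := Algebra.smul_def _ _
    rw [this] at hc
    exact mul_ne_zero hd0 hψP hc.symm
  have key : ∀ lam : Ideal R, lam.IsMaximal → P ∈ lam • (⊤ : Submodule R B) → c ∈ lam := by
    intro lam _ hmem
    have : ∃ a ∈ lam, algebraMap R K a = (d : R) • ψ P := by
      refine Submodule.smul_induction_on hmem ?_ ?_
      · intro r hr n _
        obtain ⟨u, hu⟩ := hint n
        refine ⟨r * u, lam.mul_mem_right u hr, ?_⟩
        rw [map_mul, hu, map_smul, smul_comm, Algebra.smul_def]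
        exact (Algebra.smul_def _ _).symm
      · rintro x y ⟨a, ha, hae⟩ ⟨a', ha', hae'⟩
        exact ⟨a + a', lam.add_mem ha ha', by rw [map_add, hae, hae', map_add, smul_add]⟩
    obtain ⟨a, ha, hae⟩ := this
    rw [← hc] at hae
    rwa [IsFractionRing.injective R K hae] at ha
  have hfin : {lam : Ideal R | lam.IsMaximal ∧ c ∈ lam}.Finite := by
    have h1 := Ideal.finite_factors (I := Ideal.span {c})
      (by simpa [Ideal.span_eq_bot] using hc0)
    refine Set.Finite.subset (h1.image fun v => v.asIdeal) ?_
    rintro lam ⟨hmax, hclam⟩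
    refine ⟨⟨lam, hmax.isPrime, ?_⟩, ?_, rfl⟩
    · intro hbot
      rw [hbot] at hclam
      exact hc0 (by simpa using hclam)
    · simp only [Set.mem_setOf_eq]
      rw [Ideal.dvd_iff_le, Ideal.span_le, Set.singleton_subset_iff]
      exact hclam
  refine hfin.subset ?_
  rintro lam ⟨hmax, hmem⟩
  exact ⟨hmax, key lam hmax hmem⟩
end

section
/- Let F be a number field, let u ∈ 𝓞_F^× be a unit of infinite order, let l be an odd prime, and let m ≥ 1 be an integer. Then there exist infinitely many nonzero prime ideals v of 𝓞_F, not dividing l, such that l^m divides the multiplicative order of the image of u in the unit group k_v^× of the residue field k_v = 𝓞_F/v. (This is the cyclotomic instance of Proposition 2.19: the reduction of a nontorsion element has order at least a prescribed power of l at infinitely many primes.) -/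
/-!
Suppose only finitely many primes `v` qualify, let `Q` be `l²` times their product, and put
`a = u ^ s` with `s = #(𝓞 F ⧸ Q)ˣ * l ^ m`, so that `a ≡ 1 mod Q`. Then
`y = 1 + a ^ j + ⋯ + a ^ (j (l - 1)) ≡ l mod Q` for every `j`. A prime `v ∤ l` dividing `y` sees
`a ^ j` of exact order `l`, so `l ^ (m + 1)` divides the order of `u mod v`; such a `v` is one of
the finitely many, whence `y ≡ l mod v`, which is absurd. Together with `y ≡ l mod l²` this makes
`y` an associate of `l`, so `|N y| = |N l|` for all `j`. But `a` is a unit of infinite order, so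
`|a| > 1` at some archimedean place, and choosing `j` so that `a ^ (j l)` stays away from `1` at the
places where `|a| = 1` makes `|N y|` unbounded.
-/

open Filter Finset Topology
open scoped NumberField
open IsDedekindDomain

section GeomSumGrowth

variable {𝕜 : Type*} [NormedDivisionRing 𝕜]

theorem norm_pow_sub_sub_one_le {z : 𝕜} (hz : ‖z‖ = 1) {p q : ℕ} (hpq : p ≤ q) :
    ‖z ^ (q - p) - 1‖ ≤ ‖z ^ q - 1‖ + ‖z ^ p - 1‖ :=
  calc ‖z ^ (q - p) - 1‖ = ‖z ^ p * (z ^ (q - p) - 1)‖ := by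
        rw [norm_mul, norm_pow, hz, one_pow, one_mul]
    _ = ‖(z ^ q - 1) - (z ^ p - 1)‖ := by
        rw [mul_sub, ← pow_add, Nat.add_sub_cancel' hpq, sub_sub_sub_cancel_right, mul_one]
    _ ≤ ‖z ^ q - 1‖ + ‖z ^ p - 1‖ := norm_sub_le _ _

-- Pigeonhole: in a window of `card ι + 1` consecutive exponents, two at which the same `z i ^ j`
-- is close to `1` differ by some `g ≤ card ι` with `z i ^ g` close to `1`.
theorem frequently_forall_le_norm_pow_sub_one {ι : Type*} [Fintype ι] (z : ι → 𝕜)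
    (hz : ∀ i, ‖z i‖ = 1) (hroot : ∀ i n, 0 < n → z i ^ n ≠ 1) :
    ∃ c > 0, ∃ᶠ j in atTop, ∀ i, c ≤ ‖z i ^ j - 1‖ := by
  set K := Fintype.card ι
  have hsmall : ∀ᶠ c in 𝓝[>] (0 : ℝ), ∀ i, ∀ g ∈ Icc 1 K, 2 * c < ‖z i ^ g - 1‖ := by
    refine eventually_all.2 fun i => (Finset.eventually_all _).2 fun g hg => ?_
    have hpos : 0 < ‖z i ^ g - 1‖ :=
      norm_pos_iff.2 (sub_ne_zero.2 (hroot i g (Finset.mem_Icc.1 hg).1))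
    have : Tendsto (fun c : ℝ => 2 * c) (𝓝[>] 0) (𝓝 0) := by
      simpa using ((continuous_const_mul (2 : ℝ)).tendsto 0).mono_left nhdsWithin_le_nhds
    exact this.eventually (gt_mem_nhds hpos)
  obtain ⟨c, hc, hc0⟩ := (hsmall.and self_mem_nhdsWithin).exists
  refine ⟨c, hc0, frequently_atTop.2 fun N => ?_⟩
  by_contra! hbad
  choose bad hbad using fun k : Fin (K + 1) => hbad (N + k) (Nat.le_add_right _ _)
  obtain ⟨k, k', hne, heq⟩ := Fintype.exists_ne_map_eq_of_card_lt bad (by simp [K])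
  wlog hlt : k < k' generalizing k k'
  · exact this k' k hne.symm heq.symm (lt_of_le_of_ne (not_lt.1 hlt) hne.symm)
  have hg : (k' : ℕ) - k ∈ Icc 1 K := by
    simp only [Finset.mem_Icc]; omega
  have := norm_pow_sub_sub_one_le (hz (bad k)) (Nat.add_le_add_left (Fin.le_of_lt hlt) N)
  rw [Nat.add_sub_add_left] at this
  linarith [hbad k, heq ▸ hbad k', hc (bad k) _ hg]

theorem norm_sub_one_le_norm_geom_sum (x : 𝕜) {l : ℕ} (hl : 2 ≤ l) :
    ‖x‖ - 1 ≤ ‖∑ i ∈ range l, x ^ i‖ := by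
  rcases le_or_gt ‖x‖ 1 with hx | hx
  · linarith [norm_nonneg (∑ i ∈ range l, x ^ i)]
  have hsq : ‖x‖ ^ 2 ≤ ‖x‖ ^ l := pow_le_pow_right₀ hx.le hl
  have hpow : ‖x‖ ^ l - 1 ≤ ‖∑ i ∈ range l, x ^ i‖ * (‖x‖ + 1) :=
    calc ‖x‖ ^ l - 1 ≤ ‖x ^ l - 1‖ := by simpa [norm_pow] using norm_sub_norm_le (x ^ l) 1
      _ = ‖∑ i ∈ range l, x ^ i‖ * ‖x - 1‖ := by rw [← norm_mul, geom_sum_mul]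
      _ ≤ ‖∑ i ∈ range l, x ^ i‖ * (‖x‖ + 1) := by
        gcongr; simpa using norm_sub_le x 1
  nlinarith

theorem norm_pow_sub_one_le_two_mul_norm_geom_sum {x : 𝕜} (hx : ‖x‖ ≤ 1) (l : ℕ) :
    ‖x ^ l - 1‖ ≤ 2 * ‖∑ i ∈ range l, x ^ i‖ :=
  calc ‖x ^ l - 1‖ = ‖∑ i ∈ range l, x ^ i‖ * ‖x - 1‖ := by rw [← norm_mul, geom_sum_mul]
    _ ≤ ‖∑ i ∈ range l, x ^ i‖ * 2 := by
      gcongr; linarith [norm_sub_le x 1, norm_one (α := 𝕜)]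
    _ = 2 * ‖∑ i ∈ range l, x ^ i‖ := mul_comm _ _

theorem eventually_le_norm_geom_sum_pow {z : 𝕜} (hz : ‖z‖ ≠ 1) {l : ℕ} (hl : 2 ≤ l) :
    ∀ᶠ j in atTop, 1 / 2 ≤ ‖∑ i ∈ range l, (z ^ j) ^ i‖ := by
  rcases hz.lt_or_gt with hz | hz
  · have hlim : Tendsto (fun j => ∑ i ∈ range l, (z ^ j) ^ i) atTop (𝓝 1) := by
      have := tendsto_finsetSum (range l) fun i _ =>
        ((tendsto_pow_atTop_nhds_zero_of_norm_lt_one hz).pow i)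
      simpa [zero_pow_eq, Finset.sum_ite_eq', show 0 < l by omega] using this
    exact (hlim.norm.eventually (lt_mem_nhds (by norm_num : (1 / 2 : ℝ) < ‖(1 : 𝕜)‖))).mono
      fun _ h => h.le
  · have hlim : Tendsto (fun j => ‖z‖ ^ j - 1) atTop atTop :=
      tendsto_atTop_add_const_right _ _ (tendsto_pow_atTop_atTop_of_one_lt hz)
    filter_upwards [hlim.eventually_ge_atTop (1 / 2)] with j hj
    exact hj.trans (by simpa [norm_pow] using norm_sub_one_le_norm_geom_sum (z ^ j) hl)

theorem frequently_lt_prod_norm_geom_sum_pow {ι : Type*} [Fintype ι] (z : ι → 𝕜)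
    (hroot : ∀ i n, 0 < n → z i ^ n ≠ 1) {i₀ : ι} (hi₀ : 1 < ‖z i₀‖) {l : ℕ} (hl : 2 ≤ l)
    (C : ℝ) : ∃ᶠ j in atTop, C < ∏ i, ‖∑ k ∈ range l, (z i ^ j) ^ k‖ := by
  classical
  obtain ⟨c, hc0, hcircle⟩ := frequently_forall_le_norm_pow_sub_one
    (fun i : {i // ‖z i‖ = 1} => z i ^ l) (fun i => by simp [norm_pow, i.2])
    (fun i n hn => by rw [← pow_mul]; exact hroot i (l * n) (by positivity))
  set b := min (c / 2) (1 / 2)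
  have hb0 : 0 < b := by positivity
  have hb1 : b ≤ 1 := (min_le_right _ _).trans (by norm_num)
  have hgrow : Tendsto (fun j => (‖z i₀‖ ^ j - 1) * b ^ Fintype.card ι) atTop atTop :=
    (tendsto_atTop_add_const_right _ _ (tendsto_pow_atTop_atTop_of_one_lt hi₀)).atTop_mul_const
      (by positivity)
  have hoff : ∀ᶠ j in atTop, ∀ i, ‖z i‖ ≠ 1 → b ≤ ‖∑ k ∈ range l, (z i ^ j) ^ k‖ :=
    eventually_all.2 fun i => by
      by_cases hi : ‖z i‖ = 1
      · exact .of_forall fun _ h => (h hi).elim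
      · exact (eventually_le_norm_geom_sum_pow hi hl).mono fun _ h _ => (min_le_right _ _).trans h
  refine (hcircle.and_eventually (hoff.and (hgrow.eventually_gt_atTop C))).mono ?_
  rintro j ⟨hcirclej, hoffj, hC⟩
  have hb : ∀ i, b ≤ ‖∑ k ∈ range l, (z i ^ j) ^ k‖ := fun i => by
    by_cases hi : ‖z i‖ = 1
    · have := norm_pow_sub_one_le_two_mul_norm_geom_sum (x := z i ^ j) (by simp [norm_pow, hi]) l
      rw [← pow_mul, mul_comm, pow_mul] at this
      linarith [min_le_left (c / 2) (1 / 2), hcirclej ⟨i, hi⟩]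
    · exact hoffj i hi
  calc C < (‖z i₀‖ ^ j - 1) * b ^ Fintype.card ι := hC
    _ ≤ ‖∑ k ∈ range l, (z i₀ ^ j) ^ k‖ * b ^ (Fintype.card ι - 1) := by
      refine mul_le_mul ?_ (pow_le_pow_of_le_one hb0.le hb1 (Nat.sub_le _ _)) (by positivity)
        (norm_nonneg _)
      simpa [norm_pow] using norm_sub_one_le_norm_geom_sum (z i₀ ^ j) hl
    _ = ‖∑ k ∈ range l, (z i₀ ^ j) ^ k‖ * ∏ i ∈ univ.erase i₀, b := by
      rw [prod_const, card_erase_of_mem (mem_univ _), card_univ]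
    _ ≤ ∏ i, ‖∑ k ∈ range l, (z i ^ j) ^ k‖ := by
      rw [← mul_prod_erase univ _ (mem_univ i₀)]
      gcongr with i
      exact hb i

end GeomSumGrowth

theorem associated_of_sub_mem_span_sq {R : Type*} [CommRing R] {c y : R}
    (hy : y - c ∈ Ideal.span {c ^ 2}) (hmax : ∀ M : Ideal R, M.IsMaximal → y ∈ M → c ∈ M) :
    Associated c y := by
  obtain ⟨z, hz⟩ := Ideal.mem_span_singleton'.1 hy
  have hyc : y = c * (1 + z * c) := by linear_combination -hz
  suffices hε : IsUnit (1 + z * c) from ⟨hε.unit, hyc.symm⟩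
  by_contra hε
  obtain ⟨M, hM, hεM⟩ := exists_max_ideal_of_mem_nonunits hε
  have hcM : c ∈ M := hmax M hM (hyc ▸ M.mul_mem_left c hεM)
  exact hM.ne_top ((M.eq_top_iff_one).2 (by simpa using M.sub_mem hεM (M.mul_mem_left z hcM)))

theorem orderOf_eq_of_geom_sum_eq_zero {R : Type*} [CommRing R] {l : ℕ} [Fact l.Prime] {x : R}
    (hl : (l : R) ≠ 0) (hx : ∑ i ∈ range l, x ^ i = 0) : orderOf x = l := by
  refine orderOf_eq_prime ?_ fun h1 => hl (by simpa [h1] using hx)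
  rw [← sub_eq_zero, ← geom_sum_mul, hx, zero_mul]

theorem pow_succ_dvd_orderOf_of_dvd_orderOf_pow {G : Type*} [Monoid G] {x : G} {l k s : ℕ}
    (hl : l.Prime) (hs : l ^ k ∣ s) (h : l ∣ orderOf (x ^ s)) : l ^ (k + 1) ∣ orderOf x := by
  by_contra hd
  obtain ⟨e, d, hld, hxd⟩ := Nat.exists_eq_pow_mul_and_not_dvd (n := orderOf x)
    (fun h0 => hd (h0 ▸ dvd_zero _)) l hl.ne_one
  have hek : e ≤ k := by
    by_contra! hke
    exact hd (hxd ▸ (pow_dvd_pow l hke).mul_right d)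
  have hpow : (x ^ s) ^ d = 1 := by
    rw [← pow_mul, orderOf_dvd_iff_pow_eq_one.symm, hxd]
    exact mul_dvd_mul ((pow_dvd_pow l hek).trans hs) dvd_rfl
  exact hld (h.trans (orderOf_dvd_of_pow_eq_one hpow))

theorem pow_succ_dvd_orderOf_of_geom_sum_eq_zero {R : Type*} [CommRing R] {l k s : ℕ}
    [Fact l.Prime] {g : Rˣ} (hl : (l : R) ≠ 0) (hs : l ^ k ∣ s)
    (hg : ∑ i ∈ range l, ((g : R) ^ s) ^ i = 0) : l ^ (k + 1) ∣ orderOf g :=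
  pow_succ_dvd_orderOf_of_dvd_orderOf_pow Fact.out hs <| by
    rw [← orderOf_units, Units.val_pow_eq_pow_val, orderOf_eq_of_geom_sum_eq_zero hl hg]

theorem pow_succ_dvd_orderOf_map_of_geom_sum_mem {R : Type*} [CommRing R] {I : Ideal R}
    {l k s : ℕ} [Fact l.Prime] {g : Rˣ} (hl : (l : R) ∉ I) (hs : l ^ k ∣ s)
    (hg : ∑ i ∈ range l, ((g : R) ^ s) ^ i ∈ I) :
    l ^ (k + 1) ∣ orderOf (Units.map (Ideal.Quotient.mk I).toMonoidHom g) := by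
  rw [← Ideal.Quotient.eq_zero_iff_mem] at hl hg
  exact pow_succ_dvd_orderOf_of_geom_sum_eq_zero (by simpa using hl) hs (by simpa using hg)

namespace NumberField

variable {F : Type*} [Field F] [NumberField F]

theorem abs_norm_eq_prod_norm_algHom (x : F) :
    (|Algebra.norm ℚ x| : ℝ) = ∏ τ : F →ₐ[ℚ] ℂ, ‖τ x‖ := by
  rw [← norm_prod, ← Algebra.norm_eq_prod_embeddings, eq_ratCast, Complex.norm_ratCast]

theorem abs_norm_eq_of_associated {x y : 𝓞 F} (h : Associated x y) :
    |Algebra.norm ℚ (x : F)| = |Algebra.norm ℚ (y : F)| := by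
  obtain ⟨ε, rfl⟩ := h
  simp [map_mul, abs_mul]

theorem Units.exists_one_lt_infinitePlace {u : (𝓞 F)ˣ} (hu : ¬IsOfFinOrder u) :
    ∃ w : InfinitePlace F, 1 < w u := by
  by_contra! hle
  have hlog : ∀ w ∈ (univ : Finset (InfinitePlace F)), (w.mult : ℝ) * Real.log (w u) ≤ 0 :=
    fun w _ => mul_nonpos_of_nonneg_of_nonpos (Nat.cast_nonneg _)
      (Real.log_nonpos (Units.pos_at_place u w).le (hle w))
  refine hu ((Units.mem_torsion F).2 fun w => Real.eq_one_of_pos_of_log_eq_zero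
    (Units.pos_at_place u w) ?_)
  have := (sum_eq_zero_iff_of_nonpos hlog).1 (Units.sum_mult_mul_log u) w (mem_univ _)
  exact (mul_eq_zero.1 this).resolve_left (Nat.cast_ne_zero.2 InfinitePlace.mult_ne_zero)

theorem Units.frequently_lt_abs_norm_geom_sum_pow {u : (𝓞 F)ˣ} (hu : ¬IsOfFinOrder u) {l : ℕ}
    (hl : 2 ≤ l) (C : ℚ) :
    ∃ᶠ j in atTop, C < |Algebra.norm ℚ ((∑ k ∈ range l, ((u : 𝓞 F) ^ j) ^ k : 𝓞 F) : F)| := by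
  obtain ⟨w, hw⟩ := exists_one_lt_infinitePlace hu
  have hroot : ∀ (τ : F →ₐ[ℚ] ℂ) n, 0 < n → τ u ^ n ≠ 1 := fun τ n hn h => by
    refine hu (isOfFinOrder_iff_pow_eq_one.2 ⟨n, hn, Units.coe_injective F ?_⟩)
    simp only [Units.coe_pow, Units.coe_one]
    exact τ.injective (by simpa using h)
  have hbig : 1 < ‖w.embedding.toRatAlgHom u‖ := by
    rwa [RingHom.toRatAlgHom_apply, InfinitePlace.norm_embedding_eq]
  refine (frequently_lt_prod_norm_geom_sum_pow (fun τ : F →ₐ[ℚ] ℂ => τ u) hroot hbig hl C).mono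
    fun j hj => ?_
  rw [← Rat.cast_lt (K := ℝ), Rat.cast_abs, abs_norm_eq_prod_norm_algHom]
  simpa using hj

end NumberField

theorem infinitely_many_primes_with_large_order_of_unit_general
    (F : Type*) [Field F] [NumberField F]
    (u : (𝓞 F)ˣ) (hu : ¬ IsOfFinOrder u)
    (l : ℕ) [Fact l.Prime] (m : ℕ) :
    {v : HeightOneSpectrum (𝓞 F) |
      (l : 𝓞 F) ∉ v.asIdeal ∧
      l ^ m ∣ orderOf (Units.map (Ideal.Quotient.mk v.asIdeal).toMonoidHom u)}.Infinite := by
  intro hfin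
  have hl : l.Prime := Fact.out
  set S := hfin.toFinset
  set Q : Ideal (𝓞 F) := Ideal.span {(l : 𝓞 F) ^ 2} * ∏ v ∈ S, v.asIdeal
  have hQ : Q ≠ ⊥ := mul_ne_zero (by simpa [Ideal.span_singleton_eq_bot] using hl.ne_zero)
    (Finset.prod_ne_zero_iff.2 fun v _ => v.ne_bot)
  have : Finite (𝓞 F ⧸ Q) := Ideal.finiteQuotientOfFreeOfNeBot Q hQ
  set s := Nat.card (𝓞 F ⧸ Q)ˣ * l ^ m
  have hs : s ≠ 0 := mul_ne_zero Nat.card_pos.ne' (pow_ne_zero _ hl.ne_zero)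
  have hus : Ideal.Quotient.mk Q ((u : 𝓞 F) ^ s) = 1 := by
    have : (Units.map (Ideal.Quotient.mk Q).toMonoidHom u) ^ s = 1 := by
      rw [pow_mul, pow_card_eq_one', one_pow]
    simpa using congrArg Units.val this
  obtain ⟨j, hj⟩ := (NumberField.Units.frequently_lt_abs_norm_geom_sum_pow
    (mt (IsOfFinOrder.of_pow · hs) hu) hl.two_le |Algebra.norm ℚ (l : F)|).exists
  set y := ∑ k ∈ range l, (((u ^ s : (𝓞 F)ˣ) : 𝓞 F) ^ j) ^ k
  have hyQ : y - l ∈ Q := by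
    rw [← Ideal.Quotient.eq_zero_iff_mem]
    simp [y, hus]
  have hassoc : Associated (l : 𝓞 F) y := by
    refine associated_of_sub_mem_span_sq (Ideal.mul_le_left hyQ) fun M hM hyM => ?_
    by_contra hlM
    let v : HeightOneSpectrum (𝓞 F) :=
      ⟨M, hM.isPrime, (Ideal.bot_lt_of_maximal M (NumberField.RingOfIntegers.not_isField F)).ne'⟩
    have hyM' : ∑ k ∈ range l, ((u : 𝓞 F) ^ (s * j)) ^ k ∈ M := by simpa [y, pow_mul] using hyM
    have hvS : v ∈ S := hfin.mem_toFinset.2 ⟨hlM, (pow_dvd_pow l m.le_succ).trans <|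
      pow_succ_dvd_orderOf_map_of_geom_sum_mem hlM ((dvd_mul_left _ _).mul_right j) hyM'⟩
    have hQM : Q ≤ M := Ideal.mul_le_right.trans (Ideal.prod_le_inf.trans (Finset.inf_le hvS))
    exact hlM (by simpa using M.sub_mem hyM (hQM hyQ))
  exact (hj.trans_eq (by simpa using (NumberField.abs_norm_eq_of_associated hassoc).symm)).false

theorem infinitely_many_primes_with_large_order_of_unit
    (F : Type*) [Field F] [NumberField F]
    (u : (𝓞 F)ˣ) (hu : ¬ IsOfFinOrder u)
    (l : ℕ) [Fact l.Prime] (hl : Odd l) (m : ℕ) (hm : 1 ≤ m) :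
    {v : HeightOneSpectrum (𝓞 F) |
      (l : 𝓞 F) ∉ v.asIdeal ∧
      l ^ m ∣ orderOf (Units.map (Ideal.Quotient.mk v.asIdeal).toMonoidHom u)}.Infinite :=
  infinitely_many_primes_with_large_order_of_unit_general F u hu l m
end
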